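/- In the two-nest case with nest 1 containing two elements of weights x, y > 0 and nest parameter μ ∈ (0,1], and nest 2 containing a single element of weight w > 0 (with nest parameter 1), the ratio of probabilities P(x-element)/P(w-element) = x^{1/μ}(x^{1/μ}+y^{1/μ})^{μ−1}/w is strictly decreasing in y when μ < 1, and is independent of y when μ = 1. -/

import Mathlib

open Real Set

theorem strictAntiOn_rpow_add_rpow {c p q : ℝ} (hc : 0 ≤ c) (hp : 0 < p) (hq : q < 0) :
    StrictAntiOn (fun y : ℝ => (c + y ^ p) ^ q) (Ioi 0) := by
  have hmaps : MapsTo (fun y : ℝ => c + y ^ p) (Ioi 0) (Ioi 0) := fun y hy =>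
    add_pos_of_nonneg_of_pos hc (rpow_pos_of_pos hy p)
  have hmono : StrictMonoOn (fun y : ℝ => c + y ^ p) (Ioi 0) := fun y hy y' _ hlt =>
    add_lt_add_right (rpow_lt_rpow (le_of_lt hy) hlt hp) c
  exact (strictAntiOn_rpow_Ioi_of_exponent_neg hq).comp_strictMonoOn hmono hmaps

theorem nested_ratio_monotone_general (x w μ : ℝ) (hx : 0 < x) (hw : 0 < w)
    (hμ0 : 0 < μ) :
    (μ < 1 → StrictAntiOn
      (fun y : ℝ => x ^ (1 / μ) * (x ^ (1 / μ) + y ^ (1 / μ)) ^ (μ - 1) / w)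
      (Set.Ioi 0)) ∧
    (μ = 1 → ∀ y : ℝ, 0 < y → ∀ y' : ℝ, 0 < y' →
      x ^ (1 / μ) * (x ^ (1 / μ) + y ^ (1 / μ)) ^ (μ - 1) / w
        = x ^ (1 / μ) * (x ^ (1 / μ) + y' ^ (1 / μ)) ^ (μ - 1) / w) := by
  refine ⟨fun hμ y hy y' hy' hlt => ?_, fun hμ _ _ _ _ => by simp [hμ]⟩
  have hnest := strictAntiOn_rpow_add_rpow (rpow_nonneg hx.le (1 / μ)) (one_div_pos.2 hμ0)
    (sub_neg.2 hμ) hy hy' hlt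
  dsimp only at hnest ⊢
  gcongr

/-- Relaxation of IIA in the two-nest example: the ratio
`x^{1/μ}(x^{1/μ}+y^{1/μ})^{μ-1}/w` is strictly decreasing in `y` when `μ < 1`, and
independent of `y` when `μ = 1`. -/
theorem nested_ratio_monotone (x w μ : ℝ) (hx : 0 < x) (hw : 0 < w)
    (hμ0 : 0 < μ) (hμ1 : μ ≤ 1) :
    (μ < 1 → StrictAntiOn
      (fun y : ℝ => x ^ (1 / μ) * (x ^ (1 / μ) + y ^ (1 / μ)) ^ (μ - 1) / w)
      (Set.Ioi 0)) ∧
    (μ = 1 → ∀ y : ℝ, 0 < y → ∀ y' : ℝ, 0 < y' →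
      x ^ (1 / μ) * (x ^ (1 / μ) + y ^ (1 / μ)) ^ (μ - 1) / w
        = x ^ (1 / μ) * (x ^ (1 / μ) + y' ^ (1 / μ)) ^ (μ - 1) / w) :=
  nested_ratio_monotone_general x w μ hx hw hμ0
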